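/- The function y(x) = ln(1 + sin(π·x)) is an exact solution of Bratu's second boundary value problem: for every x with 1 + sin(π·x) > 0 (in particular for all x in [0,1], where 1 + sin(π·x) ≥ 1) one has y''(x) + π²·exp(-y(x)) = 0, and y(0) = 0 and y(1) = 0. -/

import Mathlib

/-!
For `u = 1 + sin (π x)` one has `(log u)'' = (u'' u - u'²) / u²`, and
`u'' u - u'² = -π² (sin (π x) + sin² (π x) + cos² (π x)) = -π² u`, so
`(log u)'' = -π² / u = -π² exp (-log u)`.
-/

open Real Filter Topology

theorem deriv_deriv_log_comp {u u' : ℝ → ℝ} {x u'' : ℝ}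
    (hu : ∀ᶠ t in 𝓝 x, HasDerivAt u (u' t) t) (hu' : HasDerivAt u' u'' x) (hx : u x ≠ 0) :
    deriv (deriv fun t => log (u t)) x = (u'' * u x - u' x * u' x) / u x ^ 2 := by
  have hne : ∀ᶠ t in 𝓝 x, u t ≠ 0 := hu.self_of_nhds.continuousAt.eventually_ne hx
  have hderiv : deriv (fun t => log (u t)) =ᶠ[𝓝 x] fun t => u' t / u t := by
    filter_upwards [hu, hne] with t hut ht
    exact (hut.log ht).deriv
  rw [hderiv.deriv_eq]
  exact (hu'.div hu.self_of_nhds hx).deriv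

theorem hasDerivAt_one_add_sin_pi_mul (t : ℝ) :
    HasDerivAt (fun s => 1 + sin (π * s)) (π * cos (π * t)) t := by
  simpa [mul_comm] using (((hasDerivAt_id t).const_mul π).sin).const_add 1

theorem hasDerivAt_pi_mul_cos_pi_mul (t : ℝ) :
    HasDerivAt (fun s => π * cos (π * s)) (-(π ^ 2 * sin (π * t))) t :=
  ((((hasDerivAt_id' t).const_mul π).cos).const_mul π).congr_deriv (by ring)

/-- The function `y x = ln (1 + sin (π x))` is an exact solution of Bratu's second
boundary value problem `y'' + π² * exp (-y) = 0`, `y 0 = y 1 = 0`, at every point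
where `1 + sin (π x) > 0`. -/
theorem bratu_second_bvp_exact_solution :
    (∀ x : ℝ, 0 < 1 + Real.sin (Real.pi * x) →
      deriv (deriv (fun t : ℝ => Real.log (1 + Real.sin (Real.pi * t)))) x
        + Real.pi ^ 2 * Real.exp (-(Real.log (1 + Real.sin (Real.pi * x)))) = 0) ∧
    Real.log (1 + Real.sin (Real.pi * (0 : ℝ))) = 0 ∧
    Real.log (1 + Real.sin (Real.pi * (1 : ℝ))) = 0 := by
  refine ⟨fun x hx => ?_, by simp, by simp⟩
  rw [deriv_deriv_log_comp (.of_forall hasDerivAt_one_add_sin_pi_mul)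
    (hasDerivAt_pi_mul_cos_pi_mul x) hx.ne', exp_neg, exp_log hx]
  field_simp
  linear_combination (-π ^ 2) * sin_sq_add_cos_sq (π * x)
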